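/- arXiv:2409.12823 — 3 statements merged into one kernel-verified Lean document; each statement's English description precedes it below -/
import Mathlib

section
/- In the Verma module V_0 of the Virasoro algebra with central charge c = −2 and highest weight 0, the vector ((L_{−1})² − 2 L_{−2}) L_{−1} [1] is singular: it is annihilated by L_n for all n > 0. -/
noncomputable section

/-- Generators of the Virasoro algebra: the modes L n and the central element C. -/
inductive VirGen
  | L (n : ℤ)
  | C

/-- The free associative unital C-algebra on the Virasoro generators. -/
abbrev VirFree := FreeAlgebra ℂ VirGen

/-- The generator L n in the free algebra. -/
def gL (n : ℤ) : VirFree := FreeAlgebra.ι ℂ (VirGen.L n)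
/-- The generator C in the free algebra. -/
def gC : VirFree := FreeAlgebra.ι ℂ VirGen.C

/-- The Virasoro commutation relations (defining the universal enveloping algebra). -/
inductive VirRel : VirFree → VirFree → Prop
  | comm (n m : ℤ) :
      VirRel (gL n * gL m - gL m * gL n)
        ((n - m) • gL (n + m) +
          ((((n : ℂ) ^ 3 - n) / 12) * (if n + m = 0 then 1 else 0)) • gC)
  | central (n : ℤ) : VirRel (gL n * gC - gC * gL n) 0

/-- The universal enveloping algebra of the Virasoro algebra. -/
abbrev UVir := RingQuot VirRel

/-- The mode L n in the enveloping algebra. -/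
def Lm (n : ℤ) : UVir := RingQuot.mkAlgHom ℂ VirRel (gL n)
/-- The central element C in the enveloping algebra. -/
def Cm : UVir := RingQuot.mkAlgHom ℂ VirRel gC

/-- The left ideal (L 0, L 1, L 2, C + 2) defining the Verma module of highest
weight 0 and central charge -2. -/
def vermaIdeal : Submodule UVir UVir :=
  Submodule.span UVir {Lm 0, Lm 1, Lm 2, Cm + 2}

/-- The Verma module V_0 of highest weight 0 and central charge -2. -/
abbrev Verma := UVir ⧸ vermaIdeal

/-- The highest-weight vector [1] of the Verma module. -/
def hwVec : Verma := Submodule.Quotient.mk 1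


lemma Lm_mul_comm (n m : ℤ) : Lm n * Lm m = Lm m * Lm n + (n - m) • Lm (n + m)
    + ((((n : ℂ) ^ 3 - n) / 12) * (if n + m = 0 then 1 else 0)) • Cm := by
  have h := RingQuot.mkAlgHom_rel ℂ (VirRel.comm n m)
  simp only [map_sub, map_mul, map_add, map_zsmul, map_smul] at h
  rw [sub_eq_iff_eq_add] at h
  simp only [Lm, Cm]
  rw [h]
  abel

lemma Lm_mul_Cm (n : ℤ) : Lm n * Cm = Cm * Lm n := by
  have h := RingQuot.mkAlgHom_rel ℂ (VirRel.central n)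
  rw [map_sub, map_mul, map_mul, map_zero, sub_eq_zero] at h
  exact h

lemma mem_smul_hw {x : UVir} (hx : x ∈ vermaIdeal) : x • hwVec = 0 := by
  rw [hwVec, ← Submodule.Quotient.mk_smul, smul_eq_mul, mul_one,
    Submodule.Quotient.mk_eq_zero]
  exact hx

lemma hw0 : Lm 0 • hwVec = 0 := mem_smul_hw (Submodule.subset_span (by simp))
lemma hw1 : Lm 1 • hwVec = 0 := mem_smul_hw (Submodule.subset_span (by simp))
lemma hw2 : Lm 2 • hwVec = 0 := mem_smul_hw (Submodule.subset_span (by simp))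
lemma hwC : Cm • hwVec = (-2 : ℂ) • hwVec := by
  have h : (Cm + 2) • hwVec = 0 := mem_smul_hw (Submodule.subset_span (by simp))
  have h2 : (2 : UVir) • hwVec = (2 : ℂ) • hwVec := by
    rw [show (2 : UVir) = algebraMap ℂ UVir 2 by rw [map_ofNat], algebraMap_smul]
  rw [add_smul, h2] at h
  have := add_eq_zero_iff_eq_neg.mp h
  rw [this]
  module

lemma smul_swap (n m : ℤ) (x : Verma) :
    Lm n • Lm m • x = Lm m • Lm n • x + ((n - m : ℤ) : ℂ) • Lm (n + m) • x
      + ((((n : ℂ) ^ 3 - n) / 12) * (if n + m = 0 then 1 else 0)) • Cm • x := by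
  rw [← mul_smul, ← mul_smul, Lm_mul_comm n m, add_smul, add_smul, smul_assoc, smul_assoc,
    ← Int.cast_smul_eq_zsmul ℂ]

lemma Cm_smul_swap (n : ℤ) (x : Verma) : Cm • Lm n • x = Lm n • Cm • x := by
  rw [← mul_smul, ← mul_smul, Lm_mul_Cm]

lemma v_zero_smul (x : Verma) : (0 : ℂ) • x = 0 := zero_smul ℂ (A := Verma) x
lemma v_one_smul (x : Verma) : (1 : ℂ) • x = x := one_smul ℂ (b := x)
lemma v_smul_zero (c : ℂ) : c • (0 : Verma) = 0 := smul_zero (A := Verma) c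
lemma vU_smul_zero (a : UVir) : a • (0 : Verma) = 0 := smul_zero (A := Verma) a
lemma v_smul_smul (c d : ℂ) (x : Verma) : c • d • x = (c * d) • x := smul_smul c d x
lemma v_add_smul (c d : ℂ) (x : Verma) : (c + d) • x = c • x + d • x :=
  add_smul (M := Verma) c d x
lemma v_two_smul (x : Verma) : (2 : ℂ) • x = x + x := two_smul ℂ (M := Verma) x
lemma v_smul_cancel {c : ℂ} (hc : c ≠ 0) {x : Verma} (h : c • x = 0) : x = 0 := by
  have h2 := congrArg (fun y : Verma => c⁻¹ • y) h
  simpa only [v_smul_smul, inv_mul_cancel₀ hc, v_one_smul, v_smul_zero] using h2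

/-- w1 = L_{-1} [1] -/
def w1 : Verma := Lm (-1) • hwVec
/-- w2 = L_{-1}^2 [1] -/
def w2 : Verma := Lm (-1) • w1
/-- w3 = L_{-1}^3 [1] -/
def w3 : Verma := Lm (-1) • w2
/-- u = L_{-2} L_{-1} [1] -/
def uvec : Verma := Lm (-2) • w1

lemma w2def : Lm (-1) • w1 = w2 := rfl
lemma w3def : Lm (-1) • w2 = w3 := rfl

lemma csmul_comm (A : UVir) (c : ℂ) (x : Verma) : A • c • x = c • A • x := smul_comm A c x

lemma L0w1 : Lm 0 • w1 = w1 := by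
  rw [w1, smul_swap 0 (-1)]
  norm_num [hw0, hwC, v_one_smul, v_zero_smul, v_smul_zero, vU_smul_zero]

lemma L1w1 : Lm 1 • w1 = 0 := by
  rw [w1, smul_swap 1 (-1)]
  norm_num [hw0, hw1, hwC, v_one_smul, v_zero_smul, v_smul_zero, vU_smul_zero]

lemma L2w1 : Lm 2 • w1 = 0 := by
  rw [w1, smul_swap 2 (-1)]
  norm_num [hw1, hw2, v_zero_smul, v_smul_zero, vU_smul_zero]

lemma Cw1 : Cm • w1 = (-2 : ℂ) • w1 := by
  rw [w1, Cm_smul_swap, hwC, csmul_comm]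

lemma L0w2 : Lm 0 • w2 = (2 : ℂ) • w2 := by
  rw [w2, smul_swap 0 (-1)]
  norm_num [L0w1, Cw1, w2def, v_one_smul, v_zero_smul, v_smul_zero, v_two_smul]

lemma L1w2 : Lm 1 • w2 = (2 : ℂ) • w1 := by
  rw [w2, smul_swap 1 (-1)]
  norm_num [L0w1, L1w1, Cw1, v_zero_smul, v_smul_zero, vU_smul_zero]

lemma L2w2 : Lm 2 • w2 = 0 := by
  rw [w2, smul_swap 2 (-1)]
  norm_num [L1w1, L2w1, v_zero_smul, v_smul_zero, vU_smul_zero]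

lemma L1w3 : Lm 1 • w3 = (6 : ℂ) • w2 := by
  rw [w3, smul_swap 1 (-1)]
  norm_num [L0w2, L1w2, Cw1, csmul_comm, w2def, v_smul_smul, v_zero_smul, ← v_add_smul]

lemma L2w3 : Lm 2 • w3 = (6 : ℂ) • w1 := by
  rw [w3, smul_swap 2 (-1)]
  norm_num [L1w2, L2w2, csmul_comm, v_smul_smul, v_zero_smul, v_smul_zero, vU_smul_zero,
    ← v_add_smul]

lemma L1u : Lm 1 • uvec = (3 : ℂ) • w2 := by
  rw [uvec, smul_swap 1 (-2)]
  norm_num [L1w1, w2def, v_zero_smul, v_smul_zero, vU_smul_zero]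

lemma L2u : Lm 2 • uvec = (3 : ℂ) • w1 := by
  rw [uvec, smul_swap 2 (-2)]
  norm_num [L0w1, L2w1, Cw1, v_smul_smul, v_zero_smul, v_smul_zero, vU_smul_zero,
    ← v_add_smul]

/-- in the Verma module of highest weight 0 and central charge
-2, the vector ((L (-1))^2 - 2 L (-2)) L (-1) [1] is singular: it is
annihilated by L n for all n > 0. -/
theorem level_three_singular_vector (n : ℤ) (hn : 0 < n) :
    Lm n • (((Lm (-1) * Lm (-1) - (2 : ℂ) • Lm (-2)) * Lm (-1)) • hwVec) = 0 := by
  have hW : (((Lm (-1) * Lm (-1) - (2 : ℂ) • Lm (-2)) * Lm (-1)) • hwVec)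
      = w3 - (2 : ℂ) • uvec := by
    simp only [sub_mul, sub_smul, smul_mul_assoc, mul_smul, smul_assoc, w3, w2, w1, uvec]
  rw [hW]
  set W : Verma := w3 - (2 : ℂ) • uvec with hWdef
  have hL1 : Lm 1 • W = 0 := by
    rw [hWdef, smul_sub, csmul_comm, L1w3, L1u]
    rw [v_smul_smul]
    norm_num [← v_add_smul, sub_eq_add_neg, ← neg_smul]
  have hL2 : Lm 2 • W = 0 := by
    rw [hWdef, smul_sub, csmul_comm, L2w3, L2u]
    rw [v_smul_smul]
    norm_num [← v_add_smul, sub_eq_add_neg, ← neg_smul]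
  have key : ∀ m : ℤ, 2 ≤ m → Lm m • W = 0 → Lm (m + 1) • W = 0 := by
    intro m hm hLm
    have h := smul_swap m 1 W
    rw [hL1, hLm, vU_smul_zero, vU_smul_zero, if_neg (show ¬ m + 1 = 0 by omega),
      mul_zero, v_zero_smul, add_zero, zero_add] at h
    have hne : ((m - 1 : ℤ) : ℂ) ≠ 0 := by
      simp only [ne_eq, Int.cast_eq_zero]
      omega
    exact v_smul_cancel hne h.symm
  have main : ∀ k : ℤ, 1 ≤ k → Lm k • W = 0 :=
    Int.le_induction hL1 (fun m hm ih => by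
      by_cases h1 : m = 1
      · subst h1; exact hL2
      · exact key m (by omega) ih)
  exact main n (by omega)
end
end

section
/- In the non-chiral symplectic fermions setting, the holomorphic and antiholomorphic Sugawara Virasoro modes commute: [L_n, L̄_m] = 0 on the non-chiral logarithmic Fock space F, for all n, m ∈ ℤ. -/
noncomputable section

/-- Generators of the non-chiral symplectic fermions algebra: holomorphic
modes eta k, chi k and antiholomorphic modes etaB k, chiB k. -/
inductive NSFGen
  | eta (k : ℤ)
  | chi (k : ℤ)
  | etaB (k : ℤ)
  | chiB (k : ℤ)

/-- The free associative unital C-algebra on the generators. -/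
abbrev NSFFree := FreeAlgebra ℂ NSFGen

def nge (k : ℤ) : NSFFree := FreeAlgebra.ι ℂ (NSFGen.eta k)
def ngc (k : ℤ) : NSFFree := FreeAlgebra.ι ℂ (NSFGen.chi k)
def ngeB (k : ℤ) : NSFFree := FreeAlgebra.ι ℂ (NSFGen.etaB k)
def ngcB (k : ℤ) : NSFFree := FreeAlgebra.ι ℂ (NSFGen.chiB k)

/-- The defining relations of the non-chiral symplectic fermions algebra:
the holomorphic and antiholomorphic copies each satisfy the symplectic
fermions anticommutation relations, and the two copies anticommute. -/
inductive NSFRel : NSFFree → NSFFree → Prop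
  | etaEta (k l : ℤ) : NSFRel (nge k * nge l + nge l * nge k) 0
  | chiChi (k l : ℤ) : NSFRel (ngc k * ngc l + ngc l * ngc k) 0
  | etaChi (k l : ℤ) :
      NSFRel (nge k * ngc l + ngc l * nge k)
        (algebraMap ℂ NSFFree (if k + l = 0 then (k : ℂ) else 0))
  | etaEtaB (k l : ℤ) : NSFRel (ngeB k * ngeB l + ngeB l * ngeB k) 0
  | chiChiB (k l : ℤ) : NSFRel (ngcB k * ngcB l + ngcB l * ngcB k) 0
  | etaChiB (k l : ℤ) :
      NSFRel (ngeB k * ngcB l + ngcB l * ngeB k)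
        (algebraMap ℂ NSFFree (if k + l = 0 then (k : ℂ) else 0))
  | mixedCC (k l : ℤ) : NSFRel (ngc k * ngcB l + ngcB l * ngc k) 0
  | mixedCE (k l : ℤ) : NSFRel (ngc k * ngeB l + ngeB l * ngc k) 0
  | mixedEC (k l : ℤ) : NSFRel (nge k * ngcB l + ngcB l * nge k) 0
  | mixedEE (k l : ℤ) : NSFRel (nge k * ngeB l + ngeB l * nge k) 0

/-- The non-chiral symplectic fermions algebra SF. -/
abbrev NSF := RingQuot NSFRel

def η (k : ℤ) : NSF := RingQuot.mkAlgHom ℂ NSFRel (nge k)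
def χ (k : ℤ) : NSF := RingQuot.mkAlgHom ℂ NSFRel (ngc k)
def ηB (k : ℤ) : NSF := RingQuot.mkAlgHom ℂ NSFRel (ngeB k)
def χB (k : ℤ) : NSF := RingQuot.mkAlgHom ℂ NSFRel (ngcB k)

/-- The left ideal generated by the positive modes together with
η 0 − ηB 0 and χ 0 − χB 0. -/
def nposIdeal : Submodule NSF NSF :=
  Submodule.span NSF
    ({x | ∃ k > 0, x = η k} ∪ {x | ∃ k > 0, x = χ k} ∪
     {x | ∃ k > 0, x = ηB k} ∪ {x | ∃ k > 0, x = χB k} ∪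
     {η 0 - ηB 0, χ 0 - χB 0})

/-- The non-chiral logarithmic Fock space F. -/
abbrev NFock := NSF ⧸ nposIdeal

/-- The state ω = [1]. -/
def vac : NFock := Submodule.Quotient.mk 1
/-- The identity field. -/
def oneV : NFock := (χ 0 * η 0) • vac
/-- The ground fermion ξ. -/
def xiV : NFock := -(χ 0 • vac)
/-- The ground fermion θ. -/
def thetaV : NFock := -(η 0 • vac)

/-- Holomorphic Sugawara summand. -/
def sfterm (n k : ℤ) : NSF :=
  if n ≤ 2 * k then χ (n - k) * η k else -(η k * χ (n - k))
/-- Antiholomorphic Sugawara summand. -/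
def sftermB (n k : ℤ) : NSF :=
  if n ≤ 2 * k then χB (n - k) * ηB k else -(ηB k * χB (n - k))

/-- The holomorphic Sugawara Virasoro mode L n. -/
def L (n : ℤ) (v : NFock) : NFock := ∑ᶠ k : ℤ, sfterm n k • v
/-- The antiholomorphic Sugawara Virasoro mode Lbar n. -/
def Lb (n : ℤ) (v : NFock) : NFock := ∑ᶠ k : ℤ, sftermB n k • v

/-!
Each summand of `L n` is a product of two holomorphic modes and each summand of `Lb m` a product
of two antiholomorphic ones; modes of different chirality anticommute, so the summands commute.
What remains is that both sums are honestly finite on every vector. A generator `x` of large mode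
anticommutes with every generator, so for each `a` in the algebra there is `b` with `x * a = b * x`;
since positive modes lie in the left ideal, `x` then kills the state `[a]`. Every summand far out
on either side ends in such a mode, so only finitely many summands act on `[a]`, and the two finite
double sums can be interchanged.
-/

open Filter Function

theorem Function.support_finite_of_eventually_atBot_atTop {M : Type*} [Zero M] {f : ℤ → M}
    (hbot : ∀ᶠ k in atBot, f k = 0) (htop : ∀ᶠ k in atTop, f k = 0) :
    (support f).Finite :=
  eventually_cofinite.1 (Int.cofinite_eq ▸ eventually_sup.2 ⟨hbot, htop⟩)

theorem finsum_smul_finsum_smul_comm {R M ι κ : Type*} [Semiring R] [AddCommMonoid M]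
    [Module R M] {f : ι → R} {g : κ → R} (hfg : ∀ i j, Commute (f i) (g j))
    (hf : ∀ v : M, (support fun i => f i • v).Finite)
    (hg : ∀ v : M, (support fun j => g j • v).Finite) (v : M) :
    ∑ᶠ i, f i • ∑ᶠ j, g j • v = ∑ᶠ j, g j • ∑ᶠ i, f i • v := by
  classical
  set s := (hf v).toFinset ∪ (hf (∑ᶠ j, g j • v)).toFinset
  set t := (hg v).toFinset ∪ (hg (∑ᶠ i, f i • v)).toFinset
  rw [finsum_eq_sum_of_support_subset _ (s := s) (by simp [s, Set.subset_union_right]),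
    finsum_eq_sum_of_support_subset _ (s := t) (by simp [t, Set.subset_union_left]),
    finsum_eq_sum_of_support_subset _ (s := t) (by simp [t, Set.subset_union_right]),
    finsum_eq_sum_of_support_subset _ (s := s) (by simp [s, Set.subset_union_left])]
  simp only [Finset.smul_sum, smul_smul, (hfg _ _).eq]
  exact Finset.sum_comm

section Sugawara

variable {R : Type*} [Ring R]

theorem commute_mul_of_mul_eq_neg {a b c : R} (ha : a * c = -(c * a)) (hb : b * c = -(c * b)) :
    Commute (a * b) c := by
  rw [Commute, SemiconjBy, mul_assoc, hb, mul_neg, ← mul_assoc, ha, neg_mul, neg_neg, mul_assoc]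

/-- `sfterm` and `sftermB` are `sugawaraTerm χ η` and `sugawaraTerm χB ηB` by definition. -/
def sugawaraTerm (x y : ℤ → R) (n k : ℤ) : R :=
  if n ≤ 2 * k then x (n - k) * y k else -(y k * x (n - k))

theorem commute_sugawaraTerm_of_mul_eq_neg {x y : ℤ → R} {c : R}
    (hx : ∀ i, x i * c = -(c * x i)) (hy : ∀ i, y i * c = -(c * y i)) (n k : ℤ) :
    Commute (sugawaraTerm x y n k) c := by
  unfold sugawaraTerm
  split_ifs
  · exact commute_mul_of_mul_eq_neg (hx _) (hy _)
  · exact (commute_mul_of_mul_eq_neg (hy _) (hx _)).neg_left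

theorem Commute.sugawaraTerm_right {x y : ℤ → R} {c : R}
    (hx : ∀ i, Commute c (x i)) (hy : ∀ i, Commute c (y i)) (n k : ℤ) :
    Commute c (sugawaraTerm x y n k) := by
  unfold sugawaraTerm
  split_ifs
  · exact (hx _).mul_right (hy _)
  · exact ((hy _).mul_right (hx _)).neg_right

theorem support_sugawaraTerm_smul_mk_finite (I : Submodule R R) {x y : ℤ → R} {a : R}
    (hx : ∀ᶠ k in atTop, x k * a ∈ I) (hy : ∀ᶠ k in atTop, y k * a ∈ I) (n : ℤ) :
    (support fun k => sugawaraTerm x y n k • Submodule.Quotient.mk (p := I) a).Finite := by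
  have hmk : ∀ k, sugawaraTerm x y n k * a ∈ I →
      sugawaraTerm x y n k • Submodule.Quotient.mk (p := I) a = 0 := fun k hk =>
    (Submodule.Quotient.mk_smul I _ a).symm.trans ((Submodule.Quotient.mk_eq_zero I).2 hk)
  refine support_finite_of_eventually_atBot_atTop ?_ ?_
  · have hnk : Tendsto (fun k => n - k) atBot atTop :=
      tendsto_atBot_atTop.2 fun b => ⟨n - b, fun k hk => by omega⟩
    filter_upwards [hnk.eventually hx, eventually_lt_atBot 0, eventually_lt_atBot n]
      with k hxk hk0 hkn
    refine hmk k ?_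
    rw [sugawaraTerm, if_neg (by omega), neg_mul, mul_assoc]
    exact I.neg_mem (I.smul_mem _ hxk)
  · filter_upwards [hy, eventually_ge_atTop 0, eventually_ge_atTop n]
      with k hyk hk0 hkn
    refine hmk k ?_
    rw [sugawaraTerm, if_pos (by omega), mul_assoc]
    exact I.smul_mem _ hyk

end Sugawara

namespace NSFGen

def mode : NSFGen → ℤ
  | eta k | chi k | etaB k | chiB k => k

def isHolo : NSFGen → Bool
  | eta _ | chi _ => true
  | etaB _ | chiB _ => false

def toNSF (g : NSFGen) : NSF := RingQuot.mkAlgHom ℂ NSFRel (FreeAlgebra.ι ℂ g)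

theorem mkAlgHom_mul_eq_neg_of_rel {x y : NSFFree} (h : NSFRel (x * y + y * x) 0) :
    RingQuot.mkAlgHom ℂ NSFRel x * RingQuot.mkAlgHom ℂ NSFRel y =
      -(RingQuot.mkAlgHom ℂ NSFRel y * RingQuot.mkAlgHom ℂ NSFRel x) := by
  have := RingQuot.mkAlgHom_rel ℂ h
  rw [map_add, map_mul, map_mul, map_zero] at this
  exact eq_neg_of_add_eq_zero_left this

theorem mkAlgHom_mul_eq_neg_of_rel_of_ne {x y : NSFFree} {k l : ℤ}
    (h : NSFRel (x * y + y * x) (algebraMap ℂ NSFFree (if k + l = 0 then (k : ℂ) else 0)))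
    (hkl : k + l ≠ 0) :
    RingQuot.mkAlgHom ℂ NSFRel x * RingQuot.mkAlgHom ℂ NSFRel y =
      -(RingQuot.mkAlgHom ℂ NSFRel y * RingQuot.mkAlgHom ℂ NSFRel x) := by
  have := RingQuot.mkAlgHom_rel ℂ h
  rw [map_add, map_mul, map_mul, if_neg hkl, map_zero, map_zero] at this
  exact eq_neg_of_add_eq_zero_left this

theorem toNSF_mul_toNSF (g h : NSFGen) (hgh : g.isHolo ≠ h.isHolo ∨ g.mode + h.mode ≠ 0) :
    g.toNSF * h.toNSF = -(h.toNSF * g.toNSF) := by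
  have hswap {a b : NSF} (hba : b * a = -(a * b)) : a * b = -(b * a) :=
    neg_eq_iff_eq_neg.mp hba.symm
  cases g <;> cases h <;> simp only [isHolo, mode, ne_eq, not_true_eq_false, false_or] at hgh <;>
    first
    | exact mkAlgHom_mul_eq_neg_of_rel (by constructor)
    | exact mkAlgHom_mul_eq_neg_of_rel_of_ne (by constructor) (by omega)
    | exact hswap (mkAlgHom_mul_eq_neg_of_rel (by constructor))
    | exact hswap (mkAlgHom_mul_eq_neg_of_rel_of_ne (by constructor) (by omega))

theorem toNSF_mem_nposIdeal (g : NSFGen) (hg : 0 < g.mode) : g.toNSF ∈ nposIdeal := by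
  refine Submodule.subset_span ?_
  cases g <;> simp only [mode] at hg
  · exact Or.inl (Or.inl (Or.inl (Or.inl ⟨_, hg, rfl⟩)))
  · exact Or.inl (Or.inl (Or.inl (Or.inr ⟨_, hg, rfl⟩)))
  · exact Or.inl (Or.inl (Or.inr ⟨_, hg, rfl⟩))
  · exact Or.inl (Or.inr ⟨_, hg, rfl⟩)

end NSFGen

theorem eventually_semiconjBy_toNSF (a : NSF) :
    ∀ᶠ k in atTop, ∀ g : NSFGen, g.mode = k → ∃ b, SemiconjBy g.toNSF a b := by
  obtain ⟨x, rfl⟩ := RingQuot.mkAlgHom_surjective ℂ NSFRel a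
  induction x using FreeAlgebra.induction with
  | grade0 r =>
    refine .of_forall fun _ g _ => ⟨algebraMap ℂ NSF r, ?_⟩
    rw [AlgHom.commutes]
    exact Algebra.commute_algebraMap_right r _
  | grade1 h =>
    filter_upwards [eventually_gt_atTop (-h.mode)] with k hk g hg
    exact ⟨-h.toNSF,
      (g.toNSF_mul_toNSF h (Or.inr (by omega))).trans (neg_mul h.toNSF g.toNSF).symm⟩
  | mul x y hx hy =>
    filter_upwards [hx, hy] with k hxk hyk g hg
    obtain ⟨b, hb⟩ := hxk g hg
    obtain ⟨c, hc⟩ := hyk g hg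
    exact ⟨b * c, map_mul (RingQuot.mkAlgHom ℂ NSFRel) x y ▸ hb.mul_right hc⟩
  | add x y hx hy =>
    filter_upwards [hx, hy] with k hxk hyk g hg
    obtain ⟨b, hb⟩ := hxk g hg
    obtain ⟨c, hc⟩ := hyk g hg
    exact ⟨b + c, map_add (RingQuot.mkAlgHom ℂ NSFRel) x y ▸ hb.add_right hc⟩

theorem eventually_toNSF_mul_mem_nposIdeal (a : NSF) :
    ∀ᶠ k in atTop, ∀ g : NSFGen, g.mode = k → g.toNSF * a ∈ nposIdeal := by
  filter_upwards [eventually_semiconjBy_toNSF a, eventually_gt_atTop 0] with k hk hk0 g hg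
  obtain ⟨b, hb⟩ := hk g hg
  rw [hb.eq]
  exact nposIdeal.smul_mem b (g.toNSF_mem_nposIdeal (hg ▸ hk0))

theorem support_sfterm_smul_finite (n : ℤ) (v : NFock) :
    (support fun k => sfterm n k • v).Finite := by
  obtain ⟨a, rfl⟩ := Submodule.Quotient.mk_surjective _ v
  have h := eventually_toNSF_mul_mem_nposIdeal a
  exact support_sugawaraTerm_smul_mk_finite nposIdeal (h.mono fun k hk => hk (.chi k) rfl)
    (h.mono fun k hk => hk (.eta k) rfl) n

theorem support_sftermB_smul_finite (n : ℤ) (v : NFock) :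
    (support fun k => sftermB n k • v).Finite := by
  obtain ⟨a, rfl⟩ := Submodule.Quotient.mk_surjective _ v
  have h := eventually_toNSF_mul_mem_nposIdeal a
  exact support_sugawaraTerm_smul_mk_finite nposIdeal (h.mono fun k hk => hk (.chiB k) rfl)
    (h.mono fun k hk => hk (.etaB k) rfl) n

theorem commute_sfterm_sftermB (n k m l : ℤ) : Commute (sfterm n k) (sftermB m l) := by
  have hanti : ∀ g h : NSFGen, g.isHolo = true → h.isHolo = false →
      g.toNSF * h.toNSF = -(h.toNSF * g.toNSF) := fun g h hg hh =>
    g.toNSF_mul_toNSF h (Or.inl (by rw [hg, hh]; decide))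
  refine Commute.sugawaraTerm_right (fun j => ?_) (fun j => ?_) m l <;>
    refine commute_sugawaraTerm_of_mul_eq_neg (fun i => ?_) (fun i => ?_) n k
  · exact hanti (.chi i) (.chiB j) rfl rfl
  · exact hanti (.eta i) (.chiB j) rfl rfl
  · exact hanti (.chi i) (.etaB j) rfl rfl
  · exact hanti (.eta i) (.etaB j) rfl rfl

/-- the holomorphic and antiholomorphic Sugawara Virasoro modes
commute on the non-chiral logarithmic Fock space. -/
theorem holo_antiholo_commute (n m : ℤ) (v : NFock) :
    L n (Lb m v) = Lb m (L n v) :=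
  finsum_smul_finsum_smul_comm (commute_sfterm_sftermB n · m ·) (support_sfterm_smul_finite n)
    (support_sftermB_smul_finite m) v
end
end

section
/- For each α ∈ ℂ, there exists a unique SF-module automorphism φ_α of the non-chiral logarithmic Fock space F with φ_α(ω) = ω + α·𝟙, and φ_α is nontrivial whenever α ≠ 0; moreover φ_α commutes with all Virasoro modes L_n and L̄_n. -/
noncomputable section

open NSFGen in
example : True := trivial

-- basic relations in NSF
lemma rel_eq {x y : NSFFree} (h : NSFRel x y) :
    RingQuot.mkAlgHom ℂ NSFRel x = RingQuot.mkAlgHom ℂ NSFRel y :=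
  RingQuot.mkAlgHom_rel ℂ h

lemma eta_eta (k l : ℤ) : η k * η l + η l * η k = 0 := by
  simpa [η, nge, map_add, map_mul] using rel_eq (NSFRel.etaEta k l)

lemma chi_chi (k l : ℤ) : χ k * χ l + χ l * χ k = 0 := by
  simpa [χ, ngc, map_add, map_mul] using rel_eq (NSFRel.chiChi k l)

lemma eta_chi (k l : ℤ) :
    η k * χ l + χ l * η k = algebraMap ℂ NSF (if k + l = 0 then (k : ℂ) else 0) := by
  simpa [η, χ, nge, ngc, map_add, map_mul] using rel_eq (NSFRel.etaChi k l)

lemma mixed_ee (k l : ℤ) : η k * ηB l + ηB l * η k = 0 := by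
  simpa [η, ηB, nge, ngeB, map_add, map_mul] using rel_eq (NSFRel.mixedEE k l)

lemma mixed_ce (k l : ℤ) : χ k * ηB l + ηB l * χ k = 0 := by
  simpa [χ, ηB, ngc, ngeB, map_add, map_mul] using rel_eq (NSFRel.mixedCE k l)

lemma mixed_ec (k l : ℤ) : η k * χB l + χB l * η k = 0 := by
  simpa [η, χB, nge, ngcB, map_add, map_mul] using rel_eq (NSFRel.mixedEC k l)

lemma mixed_cc (k l : ℤ) : χ k * χB l + χB l * χ k = 0 := by
  simpa [χ, χB, ngc, ngcB, map_add, map_mul] using rel_eq (NSFRel.mixedCC k l)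
-- η 0 and χ 0 anticommute with everything
lemma anti_of_rel {a b : NSF} (h : a * b + b * a = 0) : a * b = -(b * a) :=
  eq_neg_of_add_eq_zero_left h

lemma if_zero (k : ℤ) : (if k + 0 = 0 then (k : ℂ) else 0) = 0 := by
  split_ifs with h
  · simp [show k = 0 by omega]
  · rfl

lemma if_zero' (k : ℤ) : (if (0:ℤ) + k = 0 then ((0:ℤ) : ℂ) else 0) = 0 := by
  split_ifs <;> simp

lemma eta0_eta (k : ℤ) : η 0 * η k = -(η k * η 0) := anti_of_rel (eta_eta 0 k)
lemma chi0_eta (k : ℤ) : χ 0 * η k = -(η k * χ 0) := by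
  have h := eta_chi k 0
  rw [if_zero, map_zero] at h
  exact eq_neg_of_add_eq_zero_left (by rw [add_comm] at h; exact h)

lemma eta0_chi (k : ℤ) : η 0 * χ k = -(χ k * η 0) := by
  have h := eta_chi 0 k
  rw [if_zero', map_zero] at h
  exact anti_of_rel h
lemma chi0_chi (k : ℤ) : χ 0 * χ k = -(χ k * χ 0) := anti_of_rel (chi_chi 0 k)
lemma eta0_etaB (k : ℤ) : η 0 * ηB k = -(ηB k * η 0) := anti_of_rel (mixed_ee 0 k)
lemma chi0_etaB (k : ℤ) : χ 0 * ηB k = -(ηB k * χ 0) := anti_of_rel (mixed_ce 0 k)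
lemma eta0_chiB (k : ℤ) : η 0 * χB k = -(χB k * η 0) := anti_of_rel (mixed_ec 0 k)
lemma chi0_chiB (k : ℤ) : χ 0 * χB k = -(χB k * χ 0) := anti_of_rel (mixed_cc 0 k)

def aZ : NSF := χ 0 * η 0

lemma central_of_anti {g : NSF} (h1 : η 0 * g = -(g * η 0)) (h2 : χ 0 * g = -(g * χ 0)) :
    aZ * g = g * aZ := by
  calc χ 0 * η 0 * g = χ 0 * (η 0 * g) := mul_assoc _ _ _
    _ = χ 0 * (-(g * η 0)) := by rw [h1]
    _ = -(χ 0 * (g * η 0)) := mul_neg (χ 0) (g * η 0)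
    _ = -((χ 0 * g) * η 0) := congrArg (fun t => -t) (mul_assoc _ _ _).symm
    _ = -((-(g * χ 0)) * η 0) := by rw [h2]
    _ = (g * χ 0) * η 0 :=
        (congrArg (fun t => -t) (neg_mul (g * χ 0) (η 0))).trans (neg_neg _)
    _ = g * (χ 0 * η 0) := mul_assoc _ _ _

lemma aZ_central (x : NSF) : aZ * x = x * aZ := by
  obtain ⟨y, rfl⟩ := RingQuot.mkAlgHom_surjective ℂ NSFRel x
  induction y using FreeAlgebra.induction with
  | grade0 r => rw [AlgHom.commutes]; exact (Algebra.commutes r aZ).symm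
  | grade1 g =>
    cases g with
    | eta k => exact central_of_anti (eta0_eta k) (chi0_eta k)
    | chi k => exact central_of_anti (eta0_chi k) (chi0_chi k)
    | etaB k => exact central_of_anti (eta0_etaB k) (chi0_etaB k)
    | chiB k => exact central_of_anti (eta0_chiB k) (chi0_chiB k)
  | mul a b ha hb => rw [map_mul, ← mul_assoc, ha, mul_assoc, hb, mul_assoc]
  | add a b ha hb => rw [map_add, mul_add, add_mul, ha, hb]

lemma chi0_sq : χ 0 * χ 0 = 0 := by
  have h := chi_chi 0 0
  have h2 : (2 : ℂ) • (χ 0 * χ 0) = 0 := by rw [two_smul]; exact h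
  rcases smul_eq_zero.mp h2 with h3 | h3
  · exact absurd h3 two_ne_zero
  · exact h3

lemma eta0_chi0 : η 0 * χ 0 = -(χ 0 * η 0) := by
  have h := eta_chi 0 0
  rw [if_zero', map_zero] at h
  exact anti_of_rel h

lemma aZ_sq : aZ * aZ = 0 := by
  calc aZ * aZ = χ 0 * ((η 0 * χ 0) * η 0) := by
        rw [aZ, mul_assoc, ← mul_assoc (η 0)]
    _ = χ 0 * ((-(χ 0 * η 0)) * η 0) := by rw [eta0_chi0]
    _ = χ 0 * (-((χ 0 * η 0) * η 0)) :=
        congrArg (fun t => χ 0 * t) (neg_mul (χ 0 * η 0) (η 0))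
    _ = -(χ 0 * ((χ 0 * η 0) * η 0)) := mul_neg (χ 0) ((χ 0 * η 0) * η 0)
    _ = -((χ 0 * χ 0) * (η 0 * η 0)) := by
        refine congrArg (fun t => -t) ?_
        rw [mul_assoc, mul_assoc]
    _ = 0 := by rw [chi0_sq, zero_mul, neg_zero]
deriving instance DecidableEq for NSFGen

open CliffordAlgebra in
/-- The fermionic Fock space used to separate states. -/
abbrev NV := CliffordAlgebra (0 : QuadraticForm ℂ (NSFGen →₀ ℂ))

def bv (g : NSFGen) : NSFGen →₀ ℂ := Finsupp.single g 1

def cre (g : NSFGen) : Module.End ℂ NV :=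
  LinearMap.mulLeft ℂ (CliffordAlgebra.ι (0 : QuadraticForm ℂ (NSFGen →₀ ℂ)) (bv g))

def dv (g : NSFGen) : Module.Dual ℂ (NSFGen →₀ ℂ) := Finsupp.lapply g

def ann (g : NSFGen) : Module.End ℂ NV :=
  CliffordAlgebra.contractLeft (dv g)

lemma cre_apply (g : NSFGen) (x : NV) :
    cre g x = CliffordAlgebra.ι _ (bv g) * x := rfl

lemma cre_cre (g h : NSFGen) : cre g * cre h + cre h * cre g = 0 := by
  refine LinearMap.ext fun x => ?_
  show CliffordAlgebra.ι _ (bv g) * (CliffordAlgebra.ι _ (bv h) * x)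
      + CliffordAlgebra.ι _ (bv h) * (CliffordAlgebra.ι _ (bv g) * x) = 0
  rw [← mul_assoc, ← mul_assoc, ← add_mul, CliffordAlgebra.ι_mul_ι_add_swap]
  simp [QuadraticMap.polar]

lemma ann_ann (g h : NSFGen) : ann g * ann h + ann h * ann g = 0 := by
  refine LinearMap.ext fun x => ?_
  show CliffordAlgebra.contractLeft (dv g) (CliffordAlgebra.contractLeft (dv h) x)
      + CliffordAlgebra.contractLeft (dv h) (CliffordAlgebra.contractLeft (dv g) x) = 0
  rw [CliffordAlgebra.contractLeft_comm, neg_add_cancel]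

lemma ann_cre (g h : NSFGen) :
    ann g * cre h + cre h * ann g = (if h = g then (1 : ℂ) else 0) • 1 := by
  refine LinearMap.ext fun x => ?_
  show CliffordAlgebra.contractLeft (dv g) (CliffordAlgebra.ι _ (bv h) * x)
      + CliffordAlgebra.ι _ (bv h) * (CliffordAlgebra.contractLeft (dv g) x)
      = ((if h = g then (1 : ℂ) else 0) • (1 : Module.End ℂ NV)) x
  rw [CliffordAlgebra.contractLeft_ι_mul, sub_add_cancel]
  have : dv g (bv h) = if h = g then (1 : ℂ) else 0 := by
    simp only [bv, dv, Finsupp.lapply_apply, Finsupp.single_apply]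
  rw [this]
  rfl
lemma smul_ann_ann (c c' : ℂ) (g h : NSFGen) :
    c • c' • (ann g * ann h) + c' • c • (ann h * ann g) = 0 := by
  rw [smul_smul, smul_smul, mul_comm c' c, ← smul_add, ann_ann, smul_zero]

lemma smul_ann_cre (c : ℂ) (g h : NSFGen) :
    c • (ann g * cre h) + c • (cre h * ann g) = (if h = g then c else 0) • 1 := by
  rw [← smul_add, ann_cre, smul_smul]
  congr 1
  split_ifs <;> simp

lemma smul_cre_ann (c : ℂ) (g h : NSFGen) :
    c • (cre h * ann g) + c • (ann g * cre h) = (if h = g then c else 0) • 1 := by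
  rw [add_comm]; exact smul_ann_cre c g h

lemma neg_smul_ann_cre (c : ℂ) (g h : NSFGen) :
    -(c • (ann g * cre h)) + -(c • (cre h * ann g)) = (if h = g then -c else 0) • 1 := by
  rw [← neg_add, smul_ann_cre]
  split_ifs
  · exact (neg_smul c _).symm
  · rw [zero_smul, neg_zero]

lemma neg_smul_cre_ann (c : ℂ) (g h : NSFGen) :
    -(c • (cre h * ann g)) + -(c • (ann g * cre h)) = (if h = g then -c else 0) • 1 := by
  rw [add_comm]; exact neg_smul_ann_cre c g h
open NSFGen in
def genOp : NSFGen → Module.End ℂ NV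
  | .eta k => if 0 < k then (k : ℂ) • ann (.chi (-k)) else cre (.eta k)
  | .chi k => if 0 < k then (-k : ℂ) • ann (.eta (-k)) else cre (.chi k)
  | .etaB k =>
      if 0 < k then (k : ℂ) • ann (.chiB (-k))
      else if k = 0 then cre (.eta 0) else cre (.etaB k)
  | .chiB k =>
      if 0 < k then (-k : ℂ) • ann (.etaB (-k))
      else if k = 0 then cre (.chi 0) else cre (.chiB k)

lemma hca (c : ℂ) (g h : NSFGen) :
    (c • ann g) * cre h + cre h * (c • ann g) = (if h = g then c else 0) • 1 := by
  rw [smul_mul_assoc, mul_smul_comm]; exact smul_ann_cre c g h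

lemma hac (c : ℂ) (g h : NSFGen) :
    cre h * (c • ann g) + (c • ann g) * cre h = (if h = g then c else 0) • 1 := by
  rw [add_comm]; exact hca c g h

lemma haa (c c' : ℂ) (g h : NSFGen) :
    (c • ann g) * (c' • ann h) + (c' • ann h) * (c • ann g) = 0 := by
  rw [smul_mul_assoc, mul_smul_comm, smul_mul_assoc, mul_smul_comm]
  exact smul_ann_ann c c' g h

set_option maxHeartbeats 1000000 in
lemma relCheck : ∀ ⦃x y : NSFFree⦄, NSFRel x y →
    (FreeAlgebra.lift ℂ genOp) x = (FreeAlgebra.lift ℂ genOp) y := by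
  intro x y h
  cases h with
  | etaEta k l =>
    simp only [nge, map_add, map_mul, map_zero, AlgHom.commutes, FreeAlgebra.lift_ι_apply, genOp]
    split_ifs <;>
      simp only [haa, hca, hac, cre_cre, reduceCtorEq, if_false, zero_smul,
        NSFGen.chi.injEq, NSFGen.eta.injEq, NSFGen.chiB.injEq, NSFGen.etaB.injEq] <;>
      first
        | rfl
        | (exfalso; omega)
        | (rw [if_neg (by omega), zero_smul])
        | (rw [if_pos (by omega), show (-(l:ℂ)) = (k:ℂ) by
              rw [show k = -l from by omega]; push_cast; ring])
        | (rw [if_pos (by omega)])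
        | (rw [show (k:ℂ) = 0 by rw [show k = 0 from by omega]; norm_num, zero_smul])
  | chiChi k l =>
    simp only [ngc, map_add, map_mul, map_zero, AlgHom.commutes, FreeAlgebra.lift_ι_apply, genOp]
    split_ifs <;>
      simp only [haa, hca, hac, cre_cre, reduceCtorEq, if_false, zero_smul,
        NSFGen.chi.injEq, NSFGen.eta.injEq, NSFGen.chiB.injEq, NSFGen.etaB.injEq] <;>
      first
        | rfl
        | (exfalso; omega)
        | (rw [if_neg (by omega), zero_smul])
        | (rw [if_pos (by omega), show (-(l:ℂ)) = (k:ℂ) by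
              rw [show k = -l from by omega]; push_cast; ring])
        | (rw [if_pos (by omega)])
        | (rw [show (k:ℂ) = 0 by rw [show k = 0 from by omega]; norm_num, zero_smul])
  | etaEtaB k l =>
    simp only [ngeB, map_add, map_mul, map_zero, AlgHom.commutes, FreeAlgebra.lift_ι_apply, genOp]
    split_ifs <;>
      simp only [haa, hca, hac, cre_cre, reduceCtorEq, if_false, zero_smul,
        NSFGen.chi.injEq, NSFGen.eta.injEq, NSFGen.chiB.injEq, NSFGen.etaB.injEq] <;>
      first
        | rfl
        | (exfalso; omega)
        | (rw [if_neg (by omega), zero_smul])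
        | (rw [if_pos (by omega), show (-(l:ℂ)) = (k:ℂ) by
              rw [show k = -l from by omega]; push_cast; ring])
        | (rw [if_pos (by omega)])
        | (rw [show (k:ℂ) = 0 by rw [show k = 0 from by omega]; norm_num, zero_smul])
  | chiChiB k l =>
    simp only [ngcB, map_add, map_mul, map_zero, AlgHom.commutes, FreeAlgebra.lift_ι_apply, genOp]
    split_ifs <;>
      simp only [haa, hca, hac, cre_cre, reduceCtorEq, if_false, zero_smul,
        NSFGen.chi.injEq, NSFGen.eta.injEq, NSFGen.chiB.injEq, NSFGen.etaB.injEq] <;>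
      first
        | rfl
        | (exfalso; omega)
        | (rw [if_neg (by omega), zero_smul])
        | (rw [if_pos (by omega), show (-(l:ℂ)) = (k:ℂ) by
              rw [show k = -l from by omega]; push_cast; ring])
        | (rw [if_pos (by omega)])
        | (rw [show (k:ℂ) = 0 by rw [show k = 0 from by omega]; norm_num, zero_smul])
  | mixedCC k l =>
    simp only [ngc, ngcB, map_add, map_mul, map_zero, AlgHom.commutes, FreeAlgebra.lift_ι_apply, genOp]
    split_ifs <;>
      simp only [haa, hca, hac, cre_cre, reduceCtorEq, if_false, zero_smul,
        NSFGen.chi.injEq, NSFGen.eta.injEq, NSFGen.chiB.injEq, NSFGen.etaB.injEq] <;>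
      first
        | rfl
        | (exfalso; omega)
        | (rw [if_neg (by omega), zero_smul])
        | (rw [if_pos (by omega), show (-(l:ℂ)) = (k:ℂ) by
              rw [show k = -l from by omega]; push_cast; ring])
        | (rw [if_pos (by omega)])
        | (rw [show (k:ℂ) = 0 by rw [show k = 0 from by omega]; norm_num, zero_smul])
  | mixedCE k l =>
    simp only [ngc, ngeB, map_add, map_mul, map_zero, AlgHom.commutes, FreeAlgebra.lift_ι_apply, genOp]
    split_ifs <;>
      simp only [haa, hca, hac, cre_cre, reduceCtorEq, if_false, zero_smul,
        NSFGen.chi.injEq, NSFGen.eta.injEq, NSFGen.chiB.injEq, NSFGen.etaB.injEq] <;>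
      first
        | rfl
        | (exfalso; omega)
        | (rw [if_neg (by omega), zero_smul])
        | (rw [if_pos (by omega), show (-(l:ℂ)) = (k:ℂ) by
              rw [show k = -l from by omega]; push_cast; ring])
        | (rw [if_pos (by omega)])
        | (rw [show (k:ℂ) = 0 by rw [show k = 0 from by omega]; norm_num, zero_smul])
  | mixedEC k l =>
    simp only [nge, ngcB, map_add, map_mul, map_zero, AlgHom.commutes, FreeAlgebra.lift_ι_apply, genOp]
    split_ifs <;>
      simp only [haa, hca, hac, cre_cre, reduceCtorEq, if_false, zero_smul,
        NSFGen.chi.injEq, NSFGen.eta.injEq, NSFGen.chiB.injEq, NSFGen.etaB.injEq] <;>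
      first
        | rfl
        | (exfalso; omega)
        | (rw [if_neg (by omega), zero_smul])
        | (rw [if_pos (by omega), show (-(l:ℂ)) = (k:ℂ) by
              rw [show k = -l from by omega]; push_cast; ring])
        | (rw [if_pos (by omega)])
        | (rw [show (k:ℂ) = 0 by rw [show k = 0 from by omega]; norm_num, zero_smul])
  | mixedEE k l =>
    simp only [nge, ngeB, map_add, map_mul, map_zero, AlgHom.commutes, FreeAlgebra.lift_ι_apply, genOp]
    split_ifs <;>
      simp only [haa, hca, hac, cre_cre, reduceCtorEq, if_false, zero_smul,
        NSFGen.chi.injEq, NSFGen.eta.injEq, NSFGen.chiB.injEq, NSFGen.etaB.injEq] <;>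
      first
        | rfl
        | (exfalso; omega)
        | (rw [if_neg (by omega), zero_smul])
        | (rw [if_pos (by omega), show (-(l:ℂ)) = (k:ℂ) by
              rw [show k = -l from by omega]; push_cast; ring])
        | (rw [if_pos (by omega)])
        | (rw [show (k:ℂ) = 0 by rw [show k = 0 from by omega]; norm_num, zero_smul])
  | etaChi k l =>
    simp only [nge, ngc, map_add, map_mul, map_zero, AlgHom.commutes, FreeAlgebra.lift_ι_apply, genOp]
    rw [Algebra.algebraMap_eq_smul_one]
    split_ifs <;>
      simp only [haa, hca, hac, cre_cre, reduceCtorEq, if_false, zero_smul,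
        NSFGen.chi.injEq, NSFGen.eta.injEq, NSFGen.chiB.injEq, NSFGen.etaB.injEq] <;>
      first
        | rfl
        | (exfalso; omega)
        | (rw [if_neg (by omega), zero_smul])
        | (rw [if_pos (by omega), show (-(l:ℂ)) = (k:ℂ) by
              rw [show k = -l from by omega]; push_cast; ring])
        | (rw [if_pos (by omega)])
        | (rw [show (k:ℂ) = 0 by rw [show k = 0 from by omega]; norm_num, zero_smul])
  | etaChiB k l =>
    simp only [ngeB, ngcB, map_add, map_mul, map_zero, AlgHom.commutes, FreeAlgebra.lift_ι_apply, genOp]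
    rw [Algebra.algebraMap_eq_smul_one]
    split_ifs <;>
      simp only [haa, hca, hac, cre_cre, reduceCtorEq, if_false, zero_smul,
        NSFGen.chi.injEq, NSFGen.eta.injEq, NSFGen.chiB.injEq, NSFGen.etaB.injEq] <;>
      first
        | rfl
        | (exfalso; omega)
        | (rw [if_neg (by omega), zero_smul])
        | (rw [if_pos (by omega), show (-(l:ℂ)) = (k:ℂ) by
              rw [show k = -l from by omega]; push_cast; ring])
        | (rw [if_pos (by omega)])
        | (rw [show (k:ℂ) = 0 by rw [show k = 0 from by omega]; norm_num, zero_smul])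
def rho : NSF →ₐ[ℂ] Module.End ℂ NV :=
  RingQuot.liftAlgHom ℂ ⟨FreeAlgebra.lift ℂ genOp, relCheck⟩

lemma rho_eta (k : ℤ) : rho (η k) = genOp (.eta k) := by
  rw [η, rho, RingQuot.liftAlgHom_mkAlgHom_apply, nge, FreeAlgebra.lift_ι_apply]
lemma rho_chi (k : ℤ) : rho (χ k) = genOp (.chi k) := by
  rw [χ, rho, RingQuot.liftAlgHom_mkAlgHom_apply, ngc, FreeAlgebra.lift_ι_apply]
lemma rho_etaB (k : ℤ) : rho (ηB k) = genOp (.etaB k) := by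
  rw [ηB, rho, RingQuot.liftAlgHom_mkAlgHom_apply, ngeB, FreeAlgebra.lift_ι_apply]
lemma rho_chiB (k : ℤ) : rho (χB k) = genOp (.chiB k) := by
  rw [χB, rho, RingQuot.liftAlgHom_mkAlgHom_apply, ngcB, FreeAlgebra.lift_ι_apply]

lemma ann_one (g : NSFGen) : ann g 1 = 0 := CliffordAlgebra.contractLeft_one _ _

lemma mem_ann {x : NSF} (hx : x ∈ nposIdeal) : rho x 1 = 0 := by
  refine Submodule.span_induction ?_ ?_ ?_ ?_ hx
  · rintro s hs
    rcases hs with ((((⟨k, hk, rfl⟩ | ⟨k, hk, rfl⟩) | ⟨k, hk, rfl⟩) | ⟨k, hk, rfl⟩) | hs)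
    · rw [rho_eta]
      simp only [genOp, if_pos hk, LinearMap.smul_apply, ann_one, smul_zero]
    · rw [rho_chi]
      simp only [genOp, if_pos hk, LinearMap.smul_apply, ann_one, smul_zero]
    · rw [rho_etaB]
      simp only [genOp, if_pos hk, LinearMap.smul_apply, ann_one, smul_zero]
    · rw [rho_chiB]
      simp only [genOp, if_pos hk, LinearMap.smul_apply, ann_one, smul_zero]
    · rcases hs with rfl | rfl
      · rw [map_sub, rho_eta, rho_etaB]
        simp only [genOp, if_neg (by omega : ¬ (0:ℤ) < 0), if_pos rfl, if_true, sub_self,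
          LinearMap.zero_apply]
      · rw [map_sub, rho_chi, rho_chiB]
        simp only [genOp, if_neg (by omega : ¬ (0:ℤ) < 0), if_pos rfl, if_true, sub_self,
          LinearMap.zero_apply]
  · simp
  · intro a b _ _ ha hb
    rw [map_add, LinearMap.add_apply, ha, hb, add_zero]
  · intro r a _ ha
    rw [smul_eq_mul, map_mul, Module.End.mul_apply, ha, map_zero]

lemma smul_aZ_not_mem {α : ℂ} (hα : α ≠ 0) : α • aZ ∉ nposIdeal := by
  intro h
  have h1 : rho (α • aZ) 1 = 0 := mem_ann h
  have haz : aZ = χ 0 * η 0 := rfl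
  rw [map_smul, haz, map_mul, rho_chi, rho_eta, LinearMap.smul_apply,
    Module.End.mul_apply] at h1
  simp only [genOp, if_neg (by omega : ¬ (0:ℤ) < 0)] at h1
  rw [cre_apply, cre_apply, mul_one] at h1
  have h2 : CliffordAlgebra.ι (0 : QuadraticForm ℂ (NSFGen →₀ ℂ)) (bv (.chi 0)) *
      CliffordAlgebra.ι (0 : QuadraticForm ℂ (NSFGen →₀ ℂ)) (bv (.eta 0)) = 0 := by
    have := congrArg (fun w => α⁻¹ • w) h1
    simpa [smul_smul, inv_mul_cancel₀ hα] using this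
  have h3 := congrArg (⇑(CliffordAlgebra.contractLeft (dv (.chi 0)))) h2
  rw [CliffordAlgebra.contractLeft_ι_mul, CliffordAlgebra.contractLeft_ι, map_zero] at h3
  have hd1 : dv (NSFGen.chi 0) (bv (.chi 0)) = 1 := by
    simp [dv, bv]
  have hd0 : dv (NSFGen.chi 0) (bv (.eta 0)) = 0 := by
    simp [dv, bv, Finsupp.single_apply]
  rw [hd1, hd0, map_zero, mul_zero, sub_zero, one_smul] at h3
  have h4 := congrArg (⇑(CliffordAlgebra.contractLeft (dv (.eta 0)))) h3
  rw [CliffordAlgebra.contractLeft_ι, map_zero] at h4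
  have hd2 : dv (NSFGen.eta 0) (bv (.eta 0)) = 1 := by simp [dv, bv]
  rw [hd2, map_one] at h4
  exact one_ne_zero h4
def shiftU (α : ℂ) : NSF := 1 + α • aZ

lemma shiftU_central (α : ℂ) (x : NSF) : shiftU α * x = x * shiftU α := by
  rw [shiftU, add_mul, mul_add, one_mul, mul_one, smul_mul_assoc, mul_smul_comm, aZ_central]

lemma shiftU_mul (α β : ℂ) : shiftU α * shiftU β = shiftU (α + β) := by
  rw [shiftU, shiftU, shiftU, add_mul, one_mul, mul_add, mul_one, smul_mul_assoc,
    mul_smul_comm, smul_smul, aZ_sq, smul_zero, add_zero, add_assoc, add_smul,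
    add_comm (β • aZ)]

lemma shiftU_zero : shiftU 0 = 1 := by rw [shiftU, zero_smul, add_zero]

def shiftL (α : ℂ) : NFock →ₗ[NSF] NFock where
  toFun v := shiftU α • v
  map_add' v w := smul_add _ _ _
  map_smul' r v := by
    show shiftU α • (r • v) = r • (shiftU α • v)
    rw [smul_smul, smul_smul, shiftU_central]

def shiftE (α : ℂ) : NFock ≃ₗ[NSF] NFock :=
  LinearEquiv.ofLinear (shiftL α) (shiftL (-α))
    (by
      refine LinearMap.ext fun v => ?_
      show shiftU α • shiftU (-α) • v = v
      rw [smul_smul, shiftU_mul, add_neg_cancel, shiftU_zero, one_smul])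
    (by
      refine LinearMap.ext fun v => ?_
      show shiftU (-α) • shiftU α • v = v
      rw [smul_smul, shiftU_mul, neg_add_cancel, shiftU_zero, one_smul])

lemma smul_vac (x : NSF) : x • vac = Submodule.Quotient.mk x := by
  show x • Submodule.Quotient.mk 1 = _
  rw [← Submodule.Quotient.mk_smul, smul_eq_mul, mul_one]

lemma shiftE_vac (α : ℂ) : shiftE α vac = vac + α • oneV := by
  show shiftU α • vac = vac + α • oneV
  rw [shiftU, add_smul, one_smul, oneV, ← aZ]
  congr 1
  rw [smul_assoc]
lemma oneV_eq : oneV = Submodule.Quotient.mk aZ := smul_vac (χ 0 * η 0)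

lemma equiv_eq_shiftE (α : ℂ) (ψ : NFock ≃ₗ[NSF] NFock) (h : ψ vac = vac + α • oneV) :
    ψ = shiftE α := by
  refine LinearEquiv.ext fun v => ?_
  obtain ⟨x, rfl⟩ := Submodule.Quotient.mk_surjective _ v
  rw [← smul_vac x, map_smul, map_smul, h, shiftE_vac]

lemma equiv_map_finsum (ψ : NFock ≃ₗ[NSF] NFock) (f : ℤ → NFock) :
    ψ (∑ᶠ k, f k) = ∑ᶠ k, ψ (f k) :=
  AddMonoidHom.map_finsum_of_injective ψ.toLinearMap.toAddMonoidHom ψ.injective f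

lemma equiv_comm_L (ψ : NFock ≃ₗ[NSF] NFock) (n : ℤ) (v : NFock) :
    ψ (L n v) = L n (ψ v) := by
  rw [L, L, equiv_map_finsum]
  exact finsum_congr fun k => map_smul ψ _ _

lemma equiv_comm_Lb (ψ : NFock ≃ₗ[NSF] NFock) (n : ℤ) (v : NFock) :
    ψ (Lb n v) = Lb n (ψ v) := by
  rw [Lb, Lb, equiv_map_finsum]
  exact finsum_congr fun k => map_smul ψ _ _

/-- for each α there is a unique SF-module automorphism of the
non-chiral Fock space sending ω to ω + α·𝟙; it is nontrivial for α ≠ 0 and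
commutes with all Virasoro modes L n and Lbar n. -/
theorem automorphism_omega_shift (α : ℂ) :
    (∃! φ : NFock ≃ₗ[NSF] NFock, φ vac = vac + α • oneV) ∧
    (∀ φ : NFock ≃ₗ[NSF] NFock, φ vac = vac + α • oneV →
      (α ≠ 0 → ∃ v : NFock, φ v ≠ v) ∧
      (∀ (n : ℤ) (v : NFock), φ (L n v) = L n (φ v) ∧ φ (Lb n v) = Lb n (φ v))) := by
  constructor
  · exact ⟨shiftE α, shiftE_vac α, fun ψ h => equiv_eq_shiftE α ψ h⟩
  · intro φ hφ
    refine ⟨fun hα => ⟨vac, ?_⟩, fun n v => ⟨equiv_comm_L φ n v, equiv_comm_Lb φ n v⟩⟩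
    rw [hφ]
    intro hcontra
    have h0 : α • oneV = 0 := by rwa [add_eq_left] at hcontra
    rw [oneV_eq, ← Submodule.Quotient.mk_smul] at h0
    exact smul_aZ_not_mem hα ((Submodule.Quotient.mk_eq_zero _).mp h0)
end
end
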